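/- For any H ∈ ℝ^{mn×mn} and any L ∈ ℝ^{m×m}, R ∈ ℝ^{n×n}, the Frobenius norm identity ‖H − L ⊗ R‖_F = ‖R̂(H) − vec(L) vec(R)ᵀ‖_F holds, where R̂ is the rearrangement operator defined by R̂(H)[mi+i', nj+j'] = H[mj+i, mj'+i']. -/

import Mathlib

open Matrix Kronecker

/-- Vectorization of an `m × n` matrix: the index pair `(i, j)` represents
the entry in row `i`, column `j`. -/
def vec {m n : ℕ} (M : Matrix (Fin m) (Fin n) ℝ) : Fin m × Fin n → ℝ :=
  fun p => M p.1 p.2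

/-- The van Loan rearrangement operator `R̂ : ℝ^{mn×mn} → ℝ^{m²×n²}`. -/
def rearrange {m n : ℕ} (H : Matrix (Fin m × Fin n) (Fin m × Fin n) ℝ) :
    Matrix (Fin m × Fin m) (Fin n × Fin n) ℝ :=
  Matrix.of fun p q => H (p.1, q.1) (p.2, q.2)

/-- The Frobenius norm of a matrix. -/
noncomputable def frobNorm {a b : Type*} [Fintype a] [Fintype b]
    (M : Matrix a b ℝ) : ℝ :=
  Real.sqrt (∑ i, ∑ j, (M i j) ^ 2)

section Rearrange

variable {m n : ℕ}

theorem rearrange_sub (A B : Matrix (Fin m × Fin n) (Fin m × Fin n) ℝ) :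
    rearrange (A - B) = rearrange A - rearrange B :=
  rfl

theorem rearrange_kronecker (L : Matrix (Fin m) (Fin m) ℝ) (R : Matrix (Fin n) (Fin n) ℝ) :
    rearrange (L ⊗ₖ R) = vecMulVec (_root_.vec L) (_root_.vec R) :=
  rfl

theorem frobNorm_rearrange (H : Matrix (Fin m × Fin n) (Fin m × Fin n) ℝ) :
    frobNorm (rearrange H) = frobNorm H := by
  unfold frobNorm rearrange
  congr 1
  simp only [Fintype.sum_prod_type, of_apply]
  exact Finset.sum_congr rfl fun _ _ => Finset.sum_comm

end Rearrange

/-- `‖H − L ⊗ R‖_F = ‖R̂(H) − vec(L) vec(R)ᵀ‖_F`. -/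
theorem frobNorm_sub_kronecker {m n : ℕ}
    (H : Matrix (Fin m × Fin n) (Fin m × Fin n) ℝ)
    (L : Matrix (Fin m) (Fin m) ℝ) (R : Matrix (Fin n) (Fin n) ℝ) :
    frobNorm (H - L ⊗ₖ R) = frobNorm (rearrange H - vecMulVec (_root_.vec L) (_root_.vec R)) := by
  rw [← rearrange_kronecker, ← rearrange_sub, frobNorm_rearrange]
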